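/- Fix α ∈ [0,1]. (1) If G₁ and G₂ are A_α-cospectral regular graphs and H is an arbitrary graph, then the subdivision-vertex joins G₁ ∨̇ H and G₂ ∨̇ H are A_α-cospectral. (2) If H₁ and H₂ are A_α-cospectral graphs with equal A_α-coronals Γ_{A_α(H₁)}(x) = Γ_{A_α(H₂)}(x), and G is a regular graph, then G ∨̇ H₁ and G ∨̇ H₂ are A_α-cospectral. -/

import Mathlib

open Matrix Polynomial
open scoped Classical

noncomputable section

/-- `A_α(G) = α·D(G) + (1-α)·A(G)`, where `D(G)` is the diagonal degree matrix and
`A(G)` the adjacency matrix. -/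
def Aalpha {V : Type*} [Fintype V] (G : SimpleGraph V) (α : ℝ) : Matrix V V ℝ :=
  α • Matrix.diagonal (fun v => (G.degree v : ℝ)) + (1 - α) • G.adjMatrix ℝ

/-- The `M`-coronal `Γ_M(x) = 1ᵀ (xI − M)⁻¹ 1`, i.e. the sum of the entries of
`(xI − M)⁻¹`. -/
def coronal {n : Type*} [Fintype n] (M : Matrix n n ℝ) (x : ℝ) : ℝ :=
  ∑ i, ∑ j, (x • (1 : Matrix n n ℝ) - M)⁻¹ i j

/-- The subdivision-vertex join `G₁ ∨̇ G₂`: take the subdivision graph `S(G₁)` (a new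
vertex inserted in each edge of `G₁`) together with `G₂`, and join every original vertex
of `G₁` with every vertex of `G₂`. -/
def subdivisionVertexJoin {V₁ V₂ : Type*} (G₁ : SimpleGraph V₁) (G₂ : SimpleGraph V₂) :
    SimpleGraph (V₁ ⊕ (↥G₁.edgeSet ⊕ V₂)) :=
  SimpleGraph.fromRel fun a b =>
    match a, b with
    | Sum.inl v, Sum.inr (Sum.inl e) => v ∈ (e : Sym2 V₁)
    | Sum.inl _, Sum.inr (Sum.inr _) => True
    | Sum.inr (Sum.inr u), Sum.inr (Sum.inr w) => G₂.Adj u w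
    | _, _ => False


/-!
Order the vertices of `G ∨̇ H` as `V(G)`, the subdivision vertices `E(G)`, and `V(H)`. Taking Schur
complements with respect to the diagonal block `(x - 2α) I` on `E(G)` and the block
`(x - α n) I - A_α(H)` on `V(H)` reduces `det (x I - A_α(G ∨̇ H))` to a determinant on `V(G)`.
When `G` is `r`-regular, the incidence matrix `R` of `G` satisfies `R Rᵀ = r I + A(G)`, so this is
the determinant of `s I - (1 - α) A_α(G)`, for a scalar `s` depending on `x`, perturbed by the
multiple `(x - 2α)(1 - α)² Γ_{A_α(H)}(x - α n)` of the all-ones matrix `J`. As the all-ones vector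
is an eigenvector of `A_α(G)`, the perturbation by `J` only rescales the determinant. Hence, for
all but finitely many `x`, the value at `x` of the characteristic polynomial of `A_α(G ∨̇ H)`
depends only on `r`, on the characteristic polynomials of `A_α(G)` and `A_α(H)`, and on the coronal
of `A_α(H)`. For (1), `r` is recovered from the spectrum of `A_α(G)` as its largest eigenvalue
(Gershgorin).
-/

namespace Matrix

variable {R : Type*} [CommRing R] {l m n : Type*}

theorem eval_charpoly_eq_det [Fintype n] [DecidableEq n] (M : Matrix n n R) (t : R) :
    M.charpoly.eval t = (t • 1 - M).det := by
  rw [eval_charpoly, scalar_apply, smul_one_eq_diagonal]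

theorem det_fromBlocks_fromCols_fromRows [Fintype l] [Fintype m] [Fintype n] [DecidableEq l]
    [DecidableEq m] [DecidableEq n] (A : Matrix l l R) (B₁ : Matrix l m R) (B₂ : Matrix l n R)
    (C₁ : Matrix m l R) (C₂ : Matrix n l R) {D₁ : Matrix m m R} {D₂ : Matrix n n R}
    (h₁ : IsUnit D₁.det) (h₂ : IsUnit D₂.det) :
    (fromBlocks A (fromCols B₁ B₂) (fromRows C₁ C₂) (fromBlocks D₁ 0 0 D₂)).det =
      D₁.det * D₂.det * (A - B₁ * D₁⁻¹ * C₁ - B₂ * D₂⁻¹ * C₂).det := by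
  have h : IsUnit (fromBlocks D₁ 0 0 D₂).det := by
    rw [det_fromBlocks_zero₂₁]; exact h₁.mul h₂
  let := invertibleOfIsUnitDet _ h
  rw [det_fromBlocks₂₂, invOf_eq_nonsing_inv, inv_fromBlocks_zero₂₁_of_isUnit_iff _ _ _
    (iff_of_true ((isUnit_iff_isUnit_det _).mpr h₁) ((isUnit_iff_isUnit_det _).mpr h₂)),
    det_fromBlocks_zero₂₁, fromCols_mul_fromBlocks, fromCols_mul_fromRows]
  simp [sub_add_eq_sub_sub]

theorem ones_mul_mul_ones [Fintype m] [Fintype n] (M : Matrix m n R) :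
    (of fun _ _ => 1 : Matrix l m R) * M * (of fun _ _ => 1 : Matrix n l R) =
      (∑ i, ∑ j, M i j) • of fun _ _ => 1 := by
  ext
  simp [mul_apply, Finset.sum_comm (γ := n)]

theorem mul_det_sub_smul_ones_of_mulVec_one [Fintype n] [DecidableEq n] {M : Matrix n n R} {c : R}
    (hM : M *ᵥ 1 = c • 1) (t : R) :
    c * (M - t • of fun _ _ => 1).det = (c - t * Fintype.card n) * M.det := by
  let u : Matrix n Unit R := of fun _ _ => 1
  let P : Matrix (n ⊕ Unit) (n ⊕ Unit) R := fromBlocks M u (of fun _ _ => t) 1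
  let Q : Matrix (n ⊕ Unit) (n ⊕ Unit) R := fromBlocks 1 u 0 (of fun _ _ => -c)
  have hMu : M * u = c • u := by
    ext i; simpa [u, mulVec, dotProduct, mul_apply] using congrFun hM i
  -- `M u = c u` makes the product block lower triangular.
  have hPQ : P * Q = fromBlocks M 0 (of fun _ _ => t) (of fun _ _ => t * Fintype.card n - c) := by
    simp only [P, Q, fromBlocks_multiply, hMu]
    congr 1 <;> ext <;> simp [u, mul_apply, mul_comm, sub_eq_add_neg]
  have hP : P.det = (M - t • of fun _ _ => 1).det := by
    rw [det_fromBlocks_one₂₂]; congr 2; ext; simp [u, mul_apply]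
  have hdet := congrArg det hPQ
  rw [det_mul, hP, det_fromBlocks_zero₂₁, det_fromBlocks_zero₁₂, det_one] at hdet
  simp only [det_unique, of_apply, one_mul] at hdet
  linear_combination -hdet

variable {K : Type*} [Field K]

theorem det_smul_one_sub_smul_eq_pow_mul_eval_charpoly [Fintype n] [DecidableEq n]
    (M : Matrix n n K) (s : K) {t : K} (ht : t ≠ 0) :
    (s • 1 - t • M).det = t ^ Fintype.card n * M.charpoly.eval (s / t) := by
  rw [eval_charpoly_eq_det, ← det_smul, smul_sub, smul_smul, mul_div_cancel₀ _ ht]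

theorem det_smul_one_sub_smul_eq_of_charpoly_eq [Fintype m] [Fintype n] [DecidableEq m]
    [DecidableEq n] {M : Matrix m m K} {N : Matrix n n K} (h : M.charpoly = N.charpoly) (s t : K) :
    (s • 1 - t • M).det = (s • 1 - t • N).det := by
  have hmn : Fintype.card m = Fintype.card n := by simpa using congrArg Polynomial.natDegree h
  rcases eq_or_ne t 0 with rfl | ht
  · simp [hmn]
  · rw [det_smul_one_sub_smul_eq_pow_mul_eval_charpoly _ _ ht,
      det_smul_one_sub_smul_eq_pow_mul_eval_charpoly _ _ ht, h, hmn]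

end Matrix

/-- `coronal` is defined with the classical `DecidableEq` instance; this unfolds it for any. -/
theorem coronal_eq_sum {n : Type*} [Fintype n] [DecidableEq n] (M : Matrix n n ℝ) (x : ℝ) :
    coronal M x = ∑ i, ∑ j, (x • (1 : Matrix n n ℝ) - M)⁻¹ i j := by
  unfold coronal
  congr!

namespace Polynomial

variable {R : Type*} [CommRing R] [IsDomain R]

theorem eventually_cofinite_eval_ne_zero {p : R[X]} (hp : p ≠ 0) :
    ∀ᶠ x in Filter.cofinite, p.eval x ≠ 0 := by
  simpa [Filter.eventually_cofinite] using finite_setOfPred_isRoot hp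

theorem eq_of_eventually_eval_eq [Infinite R] {p q : R[X]}
    (h : ∀ᶠ x in Filter.cofinite, p.eval x = q.eval x) : p = q :=
  eq_of_infinite_eval_eq p q (Filter.frequently_cofinite_iff_infinite.mp h.frequently)

end Polynomial

namespace SimpleGraph

variable {V : Type*}

def edgeIncMatrix [DecidableEq V] (G : SimpleGraph V) : Matrix V G.edgeSet ℝ :=
  (G.incMatrix ℝ).submatrix id (↑)

variable [Fintype V]

theorem degree_eq_sum_adjMatrix (G : SimpleGraph V) (v : V) :
    (G.degree v : ℝ) = ∑ w, G.adjMatrix ℝ v w := by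
  simpa [mulVec, dotProduct] using (G.adjMatrix_mulVec_const_apply (a := (1 : ℝ)) (v := v)).symm

theorem IsRegularOfDegree.two_mul_card_edgeSet {G : SimpleGraph V} {r : ℕ}
    (hG : G.IsRegularOfDegree r) : 2 * Fintype.card G.edgeSet = Fintype.card V * r := by
  rw [← edgeFinset_card, ← sum_degrees_eq_twice_card_edges]
  simp [hG.degree_eq]

variable [DecidableEq V] (G : SimpleGraph V)

theorem sum_edgeSet_incMatrix_mul (v : V) (f : Sym2 V → ℝ) :
    ∑ e : G.edgeSet, G.incMatrix ℝ v e * f e = ∑ e, G.incMatrix ℝ v e * f e := by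
  rw [← Finset.sum_subtype G.edgeFinset (fun _ => mem_edgeFinset)
    (f := fun e => G.incMatrix ℝ v e * f e)]
  refine Finset.sum_subset (Finset.subset_univ _) fun e _ he => ?_
  rw [incMatrix_of_notMem_incidenceSet _ fun h => he (mem_edgeFinset.mpr h.1), zero_mul]

theorem sum_edgeIncMatrix_apply (v : V) : ∑ e, G.edgeIncMatrix v e = G.degree v := by
  simpa [edgeIncMatrix, sum_incMatrix_apply] using G.sum_edgeSet_incMatrix_mul v 1

theorem sum_edgeIncMatrix_apply_edge (e : G.edgeSet) : ∑ v, G.edgeIncMatrix v e = 2 :=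
  G.sum_incMatrix_apply_of_mem_edgeSet e.2

theorem edgeIncMatrix_mul_transpose :
    G.edgeIncMatrix * G.edgeIncMatrixᵀ = diagonal (fun v => (G.degree v : ℝ)) + G.adjMatrix ℝ := by
  have h : G.edgeIncMatrix * G.edgeIncMatrixᵀ = G.incMatrix ℝ * (G.incMatrix ℝ)ᵀ := by
    ext v w
    simpa [mul_apply, edgeIncMatrix] using G.sum_edgeSet_incMatrix_mul v (G.incMatrix ℝ w)
  rw [h, incMatrix_mul_transpose]
  ext v w
  by_cases h : v = w <;> simp [h, adjMatrix_apply]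

variable {G} {r : ℕ}

theorem IsRegularOfDegree.Aalpha_eq (hG : G.IsRegularOfDegree r) (α : ℝ) :
    Aalpha G α = (α * r) • 1 + (1 - α) • G.adjMatrix ℝ := by
  ext v w
  by_cases h : v = w <;> simp [Aalpha, h, hG.degree_eq]

theorem IsRegularOfDegree.Aalpha_mulVec_one (hG : G.IsRegularOfDegree r) (α : ℝ) :
    Aalpha G α *ᵥ 1 = (r : ℝ) • 1 := by
  ext v
  have hA := adjMatrix_mulVec_const_apply_of_regular (α := ℝ) hG (a := 1) (v := v)
  rw [Function.const_one] at hA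
  simp only [hG.Aalpha_eq, add_mulVec, smul_mulVec, one_mulVec, Pi.add_apply, Pi.smul_apply,
    smul_eq_mul, hA, Pi.one_apply]
  ring

theorem IsRegularOfDegree.isRoot_charpoly_Aalpha [Nonempty V] (hG : G.IsRegularOfDegree r)
    (α : ℝ) : (Aalpha G α).charpoly.IsRoot r := by
  rw [← charpoly_toLin', ← Module.End.hasEigenvalue_iff_isRoot_charpoly]
  refine Module.End.hasEigenvalue_of_hasEigenvector (x := 1) ⟨?_, one_ne_zero⟩
  rw [Module.End.mem_eigenspace_iff, toLin'_apply, hG.Aalpha_mulVec_one]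

theorem IsRegularOfDegree.le_of_isRoot_charpoly_Aalpha (hG : G.IsRegularOfDegree r) {α μ : ℝ}
    (hα : α ≤ 1) (hμ : (Aalpha G α).charpoly.IsRoot μ) : μ ≤ r := by
  rw [← charpoly_toLin', ← Module.End.hasEigenvalue_iff_isRoot_charpoly] at hμ
  obtain ⟨v, hv⟩ := eigenvalue_mem_ball hμ
  rw [Metric.mem_closedBall, Real.dist_eq] at hv
  have hentry : ∀ w ∈ Finset.univ.erase v, ‖Aalpha G α v w‖ = (1 - α) * G.adjMatrix ℝ v w := by
    intro w hw
    rw [hG.Aalpha_eq, Matrix.add_apply, Matrix.smul_apply, Matrix.smul_apply,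
      one_apply_ne (Finset.ne_of_mem_erase hw).symm, smul_eq_mul, smul_eq_mul, mul_zero, zero_add,
      Real.norm_of_nonneg
        (mul_nonneg (by linarith) (by rw [adjMatrix_apply]; split_ifs <;> norm_num))]
  have hrow : ∑ w ∈ Finset.univ.erase v, ‖Aalpha G α v w‖ = (1 - α) * r := by
    rw [Finset.sum_congr rfl hentry, ← Finset.mul_sum, Finset.sum_erase _ (by simp),
      ← degree_eq_sum_adjMatrix, hG v]
  have hdiag : Aalpha G α v v = α * r := by simp [hG.Aalpha_eq]
  linarith [(abs_le.mp hv).2]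

theorem IsRegularOfDegree.of_charpoly_Aalpha_eq {V' : Type*} [Fintype V'] [DecidableEq V']
    {G' : SimpleGraph V'} {r' : ℕ} {α : ℝ} (hα : α ≤ 1) (hG : G.IsRegularOfDegree r)
    (hG' : G'.IsRegularOfDegree r') (h : (Aalpha G α).charpoly = (Aalpha G' α).charpoly) :
    G'.IsRegularOfDegree r := by
  cases isEmpty_or_nonempty V'
  · exact IsRegularOfDegree.of_isEmpty
  have hcard : Fintype.card V = Fintype.card V' := by simpa using congrArg Polynomial.natDegree h
  have : Nonempty V := Fintype.card_pos_iff.mp (hcard ▸ Fintype.card_pos)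
  have h₁ := hG.le_of_isRoot_charpoly_Aalpha hα (h ▸ hG'.isRoot_charpoly_Aalpha α)
  have h₂ := hG'.le_of_isRoot_charpoly_Aalpha hα (h ▸ hG.isRoot_charpoly_Aalpha α)
  obtain rfl : r' = r := by exact_mod_cast le_antisymm h₁ h₂
  exact hG'

end SimpleGraph

section SubdivisionVertexJoin

open SimpleGraph

variable {V W : Type*} (G : SimpleGraph V) (H : SimpleGraph W)

theorem subdivisionVertexJoin_adj_inr_inr (u w : W) :
    (subdivisionVertexJoin G H).Adj (.inr (.inr u)) (.inr (.inr w)) ↔ H.Adj u w := by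
  simp only [subdivisionVertexJoin, fromRel_adj, ne_eq, Sum.inr.injEq]
  exact ⟨fun h => h.2.elim id fun h' => h'.symm, fun h => ⟨h.ne, Or.inl h⟩⟩

variable [DecidableEq V]

theorem adjMatrix_subdivisionVertexJoin :
    (subdivisionVertexJoin G H).adjMatrix ℝ =
      fromBlocks 0 (fromCols G.edgeIncMatrix (of fun _ _ => 1))
        (fromRows G.edgeIncMatrixᵀ (of fun _ _ => 1)) (fromBlocks 0 0 0 (H.adjMatrix ℝ)) := by
  ext (v | e | u) (w | e' | u')
  all_goals
    simp [adjMatrix_apply, edgeIncMatrix, incMatrix_apply', subdivisionVertexJoin_adj_inr_inr]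
  all_goals simp [subdivisionVertexJoin, incidenceSet]

variable [Fintype V] [Fintype W]

theorem degree_subdivisionVertexJoin_inl (v : V) :
    ((subdivisionVertexJoin G H).degree (.inl v) : ℝ) = G.degree v + Fintype.card W := by
  rw [degree_eq_sum_adjMatrix, adjMatrix_subdivisionVertexJoin]
  simp [Fintype.sum_sum_type, sum_edgeIncMatrix_apply]

theorem degree_subdivisionVertexJoin_edge (e : G.edgeSet) :
    ((subdivisionVertexJoin G H).degree (.inr (.inl e)) : ℝ) = 2 := by
  rw [degree_eq_sum_adjMatrix, adjMatrix_subdivisionVertexJoin]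
  simp [Fintype.sum_sum_type, sum_edgeIncMatrix_apply_edge]

theorem degree_subdivisionVertexJoin_inr (u : W) :
    ((subdivisionVertexJoin G H).degree (.inr (.inr u)) : ℝ) = H.degree u + Fintype.card V := by
  rw [degree_eq_sum_adjMatrix, adjMatrix_subdivisionVertexJoin]
  simp [Fintype.sum_sum_type, degree_eq_sum_adjMatrix, add_comm]

variable [DecidableEq W]

theorem smul_one_sub_Aalpha_subdivisionVertexJoin (α x : ℝ) :
    x • (1 : Matrix _ _ ℝ) - Aalpha (subdivisionVertexJoin G H) α =
      fromBlocks (diagonal fun v => x - α * (G.degree v + Fintype.card W))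
        (fromCols (-(1 - α) • G.edgeIncMatrix) (-(1 - α) • of fun _ _ => 1))
        (fromRows (-(1 - α) • G.edgeIncMatrixᵀ) (-(1 - α) • of fun _ _ => 1))
        (fromBlocks ((x - 2 * α) • 1) 0 0 ((x - α * Fintype.card V) • 1 - Aalpha H α)) := by
  ext (v | e | u) (w | e' | u')
  all_goals
    simp [Aalpha, adjMatrix_subdivisionVertexJoin, diagonal_apply, one_apply,
      degree_subdivisionVertexJoin_inl, degree_subdivisionVertexJoin_edge,
      degree_subdivisionVertexJoin_inr]
  all_goals (try split_ifs) <;> ring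

variable {G H} {r : ℕ}

theorem eval_charpoly_Aalpha_subdivisionVertexJoin_eq_det (hG : G.IsRegularOfDegree r)
    {α x : ℝ} (hd : x - 2 * α ≠ 0)
    (hH : IsUnit ((x - α * Fintype.card V) • (1 : Matrix W W ℝ) - Aalpha H α).det) :
    (x - 2 * α) ^ Fintype.card V * (Aalpha (subdivisionVertexJoin G H) α).charpoly.eval x =
      (x - 2 * α) ^ Fintype.card G.edgeSet *
        ((x - α * Fintype.card V) • (1 : Matrix W W ℝ) - Aalpha H α).det *
        ((((x - 2 * α) * (x - α * (r + Fintype.card W)) - (1 - α) * (1 - 2 * α) * r) • 1 -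
          (1 - α) • Aalpha G α -
          ((x - 2 * α) * (1 - α) ^ 2 * coronal (Aalpha H α) (x - α * Fintype.card V)) •
            of fun _ _ => 1).det) := by
  have hd' : IsUnit ((x - 2 * α) • (1 : Matrix G.edgeSet G.edgeSet ℝ)).det := by
    rw [det_smul, det_one, mul_one]; exact (IsUnit.mk0 _ hd).pow _
  let := invertibleOfNonzero hd
  rw [eval_charpoly_eq_det, smul_one_sub_Aalpha_subdivisionVertexJoin,
    det_fromBlocks_fromCols_fromRows _ _ _ _ _ hd' hH, inv_smul _ _ (by simp), inv_one,
    invOf_eq_inv, det_smul, det_one, mul_one, mul_left_comm, ← det_smul]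
  congr 2
  simp only [Matrix.smul_mul, Matrix.mul_smul, Matrix.mul_one, ones_mul_mul_ones,
    edgeIncMatrix_mul_transpose, hG.degree_eq, hG.Aalpha_eq, coronal_eq_sum,
    ← smul_one_eq_diagonal]
  match_scalars <;> field_simp
  ring

theorem eval_charpoly_Aalpha_subdivisionVertexJoin (hG : G.IsRegularOfDegree r)
    {α x : ℝ} (hd : x - 2 * α ≠ 0)
    (hH : IsUnit ((x - α * Fintype.card V) • (1 : Matrix W W ℝ) - Aalpha H α).det) :
    ((x - 2 * α) * (x - α * (r + Fintype.card W)) - 2 * (1 - α) ^ 2 * r) *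
        (x - 2 * α) ^ Fintype.card V * (Aalpha (subdivisionVertexJoin G H) α).charpoly.eval x =
      (x - 2 * α) ^ Fintype.card G.edgeSet *
        ((x - α * Fintype.card V) • (1 : Matrix W W ℝ) - Aalpha H α).det *
        ((x - 2 * α) * (x - α * (r + Fintype.card W)) - 2 * (1 - α) ^ 2 * r -
          (x - 2 * α) * (1 - α) ^ 2 * coronal (Aalpha H α) (x - α * Fintype.card V) *
            Fintype.card V) *
        ((((x - 2 * α) * (x - α * (r + Fintype.card W)) - (1 - α) * (1 - 2 * α) * r) • 1 -
          (1 - α) • Aalpha G α).det) := by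
  have hN := mul_det_sub_smul_ones_of_mulVec_one
    (M := ((x - 2 * α) * (x - α * (r + Fintype.card W)) - (1 - α) * (1 - 2 * α) * r) • 1 -
      (1 - α) • Aalpha G α)
    (c := (x - 2 * α) * (x - α * (r + Fintype.card W)) - 2 * (1 - α) ^ 2 * r)
    (by
      rw [sub_mulVec, smul_mulVec, one_mulVec, smul_mulVec, hG.Aalpha_mulVec_one]
      ext
      simp only [Pi.sub_apply, Pi.smul_apply, Pi.one_apply, smul_eq_mul]
      ring)
    ((x - 2 * α) * (1 - α) ^ 2 * coronal (Aalpha H α) (x - α * Fintype.card V))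
  linear_combination
    ((x - 2 * α) * (x - α * (r + Fintype.card W)) - 2 * (1 - α) ^ 2 * r) *
        eval_charpoly_Aalpha_subdivisionVertexJoin_eq_det hG hd hH +
      (x - 2 * α) ^ Fintype.card G.edgeSet *
        ((x - α * Fintype.card V) • (1 : Matrix W W ℝ) - Aalpha H α).det * hN

theorem charpoly_Aalpha_subdivisionVertexJoin_eq {V' W' : Type*} [Fintype V'] [Fintype W']
    [DecidableEq V'] [DecidableEq W'] {G' : SimpleGraph V'} {H' : SimpleGraph W'} {α : ℝ}
    (hG : G.IsRegularOfDegree r) (hG' : G'.IsRegularOfDegree r)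
    (hGG' : (Aalpha G α).charpoly = (Aalpha G' α).charpoly)
    (hHH' : (Aalpha H α).charpoly = (Aalpha H' α).charpoly)
    (hΓ : ∀ x, coronal (Aalpha H α) x = coronal (Aalpha H' α) x) :
    (Aalpha (subdivisionVertexJoin G H) α).charpoly =
      (Aalpha (subdivisionVertexJoin G' H') α).charpoly := by
  have hV : Fintype.card V = Fintype.card V' := by simpa using congrArg natDegree hGG'
  have hW : Fintype.card W = Fintype.card W' := by simpa using congrArg natDegree hHH'
  have hE : Fintype.card G.edgeSet = Fintype.card G'.edgeSet := by
    have h := hG.two_mul_card_edgeSet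
    have h' := hG'.two_mul_card_edgeSet
    rw [hV] at h
    omega
  have hdetH (y : ℝ) : (y • (1 : Matrix W W ℝ) - Aalpha H α).det = (y • 1 - Aalpha H' α).det := by
    rw [← eval_charpoly_eq_det, hHH', eval_charpoly_eq_det]
  have hquad :
      ((X - C (2 * α)) * (X - C (α * (r + Fintype.card W))) - C (2 * (1 - α) ^ 2 * r)).Monic :=
    ((monic_X_sub_C _).mul (monic_X_sub_C _)).sub_of_left (by
      rw [degree_mul, degree_X_sub_C, degree_X_sub_C]; exact degree_C_le.trans_lt (by decide))
  refine eq_of_eventually_eval_eq ?_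
  filter_upwards [Filter.eventually_cofinite_ne (2 * α),
    (sub_left_injective (b := α * Fintype.card V)).tendsto_cofinite.eventually
      (eventually_cofinite_eval_ne_zero (Aalpha H α).charpoly_monic.ne_zero),
    eventually_cofinite_eval_ne_zero hquad.ne_zero] with x hd hH hq
  replace hd : x - 2 * α ≠ 0 := sub_ne_zero.mpr hd
  rw [eval_charpoly_eq_det] at hH
  simp only [eval_sub, eval_mul, eval_X, eval_C] at hq
  have e := eval_charpoly_Aalpha_subdivisionVertexJoin hG hd hH.isUnit
  have e' := eval_charpoly_Aalpha_subdivisionVertexJoin hG' hd (H := H')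
    (by rw [← hV, ← hdetH]; exact hH.isUnit)
  rw [← hV, ← hW, ← hE, ← hdetH, ← hΓ, ← det_smul_one_sub_smul_eq_of_charpoly_eq hGG'] at e'
  exact mul_left_cancel₀ (mul_ne_zero hq (pow_ne_zero _ hd)) (e.trans e'.symm)

end SubdivisionVertexJoin

/-- Corollary: constructions of `A_α`-cospectral pairs from subdivision-vertex joins.
(1) Joining two `A_α`-cospectral regular graphs with the same arbitrary graph `H` gives
`A_α`-cospectral graphs.  (2) Joining a regular graph `G` with two `A_α`-cospectral
graphs having equal `A_α`-coronals gives `A_α`-cospectral graphs. -/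
theorem Aalpha_cospectral_subdivisionVertexJoin
    (α : ℝ) (hα : α ∈ Set.Icc (0 : ℝ) 1) :
    (∀ (n₁ n₂ k r₁ r₂ : ℕ) (G₁ : SimpleGraph (Fin n₁)) (G₂ : SimpleGraph (Fin n₂))
        (H : SimpleGraph (Fin k)),
      G₁.IsRegularOfDegree r₁ → G₂.IsRegularOfDegree r₂ →
      (Aalpha G₁ α).charpoly = (Aalpha G₂ α).charpoly →
      (Aalpha (subdivisionVertexJoin G₁ H) α).charpoly =
        (Aalpha (subdivisionVertexJoin G₂ H) α).charpoly) ∧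
    (∀ (n k₁ k₂ r : ℕ) (G : SimpleGraph (Fin n)) (H₁ : SimpleGraph (Fin k₁))
        (H₂ : SimpleGraph (Fin k₂)),
      G.IsRegularOfDegree r →
      (Aalpha H₁ α).charpoly = (Aalpha H₂ α).charpoly →
      (∀ x : ℝ, coronal (Aalpha H₁ α) x = coronal (Aalpha H₂ α) x) →
      (Aalpha (subdivisionVertexJoin G H₁) α).charpoly =
        (Aalpha (subdivisionVertexJoin G H₂) α).charpoly) :=
  ⟨fun _ _ _ _ _ _ _ _ hG₁ hG₂ hG =>
      charpoly_Aalpha_subdivisionVertexJoin_eq hG₁ (hG₁.of_charpoly_Aalpha_eq hα.2 hG₂ hG) hG rfl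
        fun _ => rfl,
    fun _ _ _ _ _ _ _ hG hH hΓ => charpoly_Aalpha_subdivisionVertexJoin_eq hG hG rfl hH hΓ⟩
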